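/- arXiv:1804.00130 — 3 statements merged into one kernel-verified Lean document; each statement's English description precedes it below -/
import Mathlib

section
/- Let y = Ax + e with ‖x‖₀ ≤ s₁. Let S ⊆ {1,…,N} with |S| = s₂, and define x̄ by x̄_S = A_S† y (the least-squares solution on columns S) and x̄ = 0 off S. If A satisfies RIP of order s₁+s₂ with constant δ_{s₁+s₂} < 1, then ‖(x - x̄)_S‖₂ ≤ δ_{s₁+s₂}‖x - x̄‖₂ + √(1+δ_{s₂})‖e‖₂. -/
open Finset

/-- ℓ2 norm of a vector. -/
noncomputable def l2 {n : ℕ} (v : Fin n → ℝ) : ℝ := Real.sqrt (∑ i, v i ^ 2)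

/-- ℓ1 norm of a vector. -/
noncomputable def l1 {n : ℕ} (v : Fin n → ℝ) : ℝ := ∑ i, |v i|

/-- number of nonzero entries (ℓ0 "norm"). -/
noncomputable def spars {n : ℕ} (v : Fin n → ℝ) : ℕ := Set.ncard {i | v i ≠ 0}

/-- restriction of a vector to an index set (zero off the set). -/
def restr {n : ℕ} (S : Finset (Fin n)) (v : Fin n → ℝ) : Fin n → ℝ :=
  fun i => if i ∈ S then v i else 0

/-!
Write `d = x - x̄` and `w = d_S`. Since `w` vanishes off `S`, `‖w‖² = ⟨w, d⟩`, and the normal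
equations give `⟨Aw, Ad⟩ = -⟨Aw, e⟩`. Both `w` and `d` are supported on `S ∪ supp x`, which has at
most `s₁ + s₂` elements, so RIP of that order bounds `⟨w, d⟩ - ⟨Aw, Ad⟩` by `δ₁ ‖w‖ ‖d‖`
(polarization applied to `‖d‖ w ± ‖w‖ d`). Cauchy–Schwarz and RIP of order `s₂` bound
`-⟨Aw, e⟩` by `√(1 + δ₂) ‖w‖ ‖e‖`; dividing `‖w‖²` by `‖w‖` gives the claim.
-/

open Matrix

section L2

variable {n : ℕ}

lemma l2_nonneg (v : Fin n → ℝ) : 0 ≤ l2 v := Real.sqrt_nonneg _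

lemma l2_sq (v : Fin n → ℝ) : l2 v ^ 2 = v ⬝ᵥ v :=
  Real.sq_sqrt (Finset.sum_nonneg fun i _ => sq_nonneg _) |>.trans (by simp [dotProduct, sq])

lemma l2_eq_zero {v : Fin n → ℝ} : l2 v = 0 ↔ v = 0 := by
  rw [← sq_eq_zero_iff, l2_sq, dotProduct_self_eq_zero]

lemma l2_neg (v : Fin n → ℝ) : l2 (-v) = l2 v := by
  simp [l2]

lemma l2_smul (c : ℝ) (v : Fin n → ℝ) : l2 (c • v) = |c| * l2 v := by
  simp only [l2, Pi.smul_apply, smul_eq_mul, mul_pow, ← mul_sum]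
  rw [Real.sqrt_mul (sq_nonneg c), Real.sqrt_sq_eq_abs]

lemma dotProduct_le_l2_mul_l2 (u v : Fin n → ℝ) : u ⬝ᵥ v ≤ l2 u * l2 v :=
  Real.sum_mul_le_sqrt_mul_sqrt _ _ _

lemma l2_add_sq (u v : Fin n → ℝ) : l2 (u + v) ^ 2 = l2 u ^ 2 + 2 * (u ⬝ᵥ v) + l2 v ^ 2 := by
  simp only [l2_sq, add_dotProduct, dotProduct_add, dotProduct_comm v u]
  ring

lemma l2_sub_sq (u v : Fin n → ℝ) : l2 (u - v) ^ 2 = l2 u ^ 2 - 2 * (u ⬝ᵥ v) + l2 v ^ 2 := by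
  simp only [l2_sq, sub_dotProduct, dotProduct_sub, dotProduct_comm v u]
  ring

lemma restr_dotProduct (S : Finset (Fin n)) (v : Fin n → ℝ) :
    restr S v ⬝ᵥ v = l2 (restr S v) ^ 2 := by
  rw [l2_sq]
  refine Finset.sum_congr rfl fun i _ => ?_
  by_cases hi : i ∈ S <;> simp [restr, hi]

lemma spars_le_card {v : Fin n → ℝ} {T : Finset (Fin n)} (hv : ∀ i ∉ T, v i = 0) :
    spars v ≤ T.card := by
  rw [spars, ← Set.ncard_coe_finset]
  exact Set.ncard_le_ncard (fun i hi => by_contra fun hiT => hi (hv i hiT)) T.finite_toSet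

lemma exists_support_card_le {v : Fin n → ℝ} {s : ℕ} (hv : spars v ≤ s) :
    ∃ T : Finset (Fin n), T.card ≤ s ∧ ∀ i ∉ T, v i = 0 := by
  classical
  refine ⟨univ.filter fun i => v i ≠ 0, ?_, fun i hi => by simpa using hi⟩
  rw [← Set.ncard_coe_finset, coe_filter]
  simpa [spars] using hv

end L2

def HasRIP {M N : ℕ} (A : Matrix (Fin M) (Fin N) ℝ) (k : ℕ) (δ : ℝ) : Prop :=
  ∀ v : Fin N → ℝ, spars v ≤ k →
    (1 - δ) * l2 v ^ 2 ≤ l2 (A *ᵥ v) ^ 2 ∧ l2 (A *ᵥ v) ^ 2 ≤ (1 + δ) * l2 v ^ 2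

namespace HasRIP

variable {M N k : ℕ} {A : Matrix (Fin M) (Fin N) ℝ} {δ : ℝ}

lemma mul_l2_nonneg (h : HasRIP A k δ) {v : Fin N → ℝ} (hv : spars v ≤ k) : 0 ≤ δ * l2 v := by
  obtain ⟨hlow, hup⟩ := h v hv
  have hδ : 0 ≤ δ * l2 v ^ 2 := by linarith
  rcases (l2_nonneg v).eq_or_lt with h0 | hpos
  · rw [← h0, mul_zero]
  · exact nonneg_of_mul_nonneg_left (by nlinarith) hpos

lemma l2_mulVec_le (h : HasRIP A k δ) {v : Fin N → ℝ} (hv : spars v ≤ k) :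
    l2 (A *ᵥ v) ≤ Real.sqrt (1 + δ) * l2 v :=
  calc l2 (A *ᵥ v) = Real.sqrt (l2 (A *ᵥ v) ^ 2) := (Real.sqrt_sq (l2_nonneg _)).symm
    _ ≤ Real.sqrt ((1 + δ) * l2 v ^ 2) := Real.sqrt_le_sqrt (h v hv).2
    _ = Real.sqrt (1 + δ) * l2 v := by rw [Real.sqrt_mul' _ (sq_nonneg _), Real.sqrt_sq (l2_nonneg _)]

lemma mulVec_dotProduct_le (h : HasRIP A k δ) {v : Fin N → ℝ} (hv : spars v ≤ k)
    (r : Fin M → ℝ) : (A *ᵥ v) ⬝ᵥ r ≤ Real.sqrt (1 + δ) * l2 v * l2 r :=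
  (dotProduct_le_l2_mul_l2 _ r).trans
    (mul_le_mul_of_nonneg_right (h.l2_mulVec_le hv) (l2_nonneg r))

section Support

variable (h : HasRIP A k δ) {T : Finset (Fin N)} (hT : T.card ≤ k) {u v : Fin N → ℝ}
  (hu : ∀ i ∉ T, u i = 0) (hv : ∀ i ∉ T, v i = 0)
include h hT hu hv

lemma dotProduct_sub_le_half :
    u ⬝ᵥ v - (A *ᵥ u) ⬝ᵥ (A *ᵥ v) ≤ δ * (l2 u ^ 2 + l2 v ^ 2) / 2 := by
  have hadd := (h (u + v) ((spars_le_card fun i hi => by simp [hu i hi, hv i hi]).trans hT)).1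
  have hsub := (h (u - v) ((spars_le_card fun i hi => by simp [hu i hi, hv i hi]).trans hT)).2
  rw [Matrix.mulVec_add, l2_add_sq, l2_add_sq] at hadd
  rw [Matrix.mulVec_sub, l2_sub_sq, l2_sub_sq] at hsub
  linarith

lemma dotProduct_sub_le :
    u ⬝ᵥ v - (A *ᵥ u) ⬝ᵥ (A *ᵥ v) ≤ δ * (l2 u * l2 v) := by
  rcases (l2_nonneg u).eq_or_lt with hu0 | hupos
  · obtain rfl := l2_eq_zero.1 hu0.symm
    simp [← hu0]
  rcases (l2_nonneg v).eq_or_lt with hv0 | hvpos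
  · obtain rfl := l2_eq_zero.1 hv0.symm
    simp [← hv0]
  -- polarization for `‖v‖ u` and `‖u‖ v`, which have equal norms
  have := dotProduct_sub_le_half h hT (u := l2 v • u) (v := l2 u • v)
    (fun i hi => by simp [hu i hi]) (fun i hi => by simp [hv i hi])
  simp only [l2_smul, abs_of_pos hupos, abs_of_pos hvpos, Matrix.mulVec_smul, smul_dotProduct,
    dotProduct_smul, smul_eq_mul] at this
  refine le_of_mul_le_mul_left ?_ (mul_pos hupos hvpos)
  nlinarith

end Support

end HasRIP

lemma mulVec_dotProduct_eq_zero_of_normal_eq {M N : ℕ} {A : Matrix (Fin M) (Fin N) ℝ}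
    {S : Finset (Fin N)} {w : Fin N → ℝ} {r : Fin M → ℝ} (hw : ∀ i ∉ S, w i = 0)
    (hr : ∀ i ∈ S, ∑ j, A j i * r j = 0) : (A *ᵥ w) ⬝ᵥ r = 0 := by
  rw [dotProduct_comm, dotProduct_mulVec]
  refine sum_eq_zero fun i _ => ?_
  by_cases hi : i ∈ S
  · simp only [vecMul, dotProduct, mul_comm (r _)] at hr ⊢
    rw [hr i hi, zero_mul]
  · rw [hw i hi, mul_zero]

theorem stmt2_general {M N : ℕ} (A : Matrix (Fin M) (Fin N) ℝ)
    (x : Fin N → ℝ) (e : Fin M → ℝ) (y : Fin M → ℝ)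
    (hy : y = A.mulVec x + e)
    (s₁ s₂ : ℕ) (hx : spars x ≤ s₁)
    (S : Finset (Fin N)) (hS : S.card = s₂)
    (xb : Fin N → ℝ)
    -- x̄ is supported on S and x̄_S = A_S† y, characterized by the normal equations
    (hxbsupp : ∀ i ∉ S, xb i = 0)
    (hxbls : ∀ i ∈ S, ∑ j, A j i * (A.mulVec xb j - y j) = 0)
    (δ₁ δ₂ : ℝ)
    (hRIP₁ : ∀ v : Fin N → ℝ, spars v ≤ s₁ + s₂ →
      (1 - δ₁) * (l2 v) ^ 2 ≤ (l2 (A.mulVec v)) ^ 2 ∧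
      (l2 (A.mulVec v)) ^ 2 ≤ (1 + δ₁) * (l2 v) ^ 2)
    (hRIP₂ : ∀ v : Fin N → ℝ, spars v ≤ s₂ →
      (1 - δ₂) * (l2 v) ^ 2 ≤ (l2 (A.mulVec v)) ^ 2 ∧
      (l2 (A.mulVec v)) ^ 2 ≤ (1 + δ₂) * (l2 v) ^ 2) :
    l2 (restr S (x - xb)) ≤ δ₁ * l2 (x - xb) + Real.sqrt (1 + δ₂) * l2 e := by
  set d := x - xb
  set w := restr S d
  obtain ⟨Tx, hTx, hxTx⟩ := exists_support_card_le hx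
  have hT : (S ∪ Tx).card ≤ s₁ + s₂ := (card_union_le _ _).trans (by omega)
  have hwS : ∀ i ∉ S, w i = 0 := fun i hi => if_neg hi
  have hwT : ∀ i ∉ S ∪ Tx, w i = 0 := fun i hi => hwS i fun hiS => hi (mem_union_left _ hiS)
  have hdT : ∀ i ∉ S ∪ Tx, d i = 0 := fun i hi => by
    rw [mem_union, not_or] at hi
    simp [d, hxTx i hi.2, hxbsupp i hi.1]
  have hcross : w ⬝ᵥ d - (A *ᵥ w) ⬝ᵥ (A *ᵥ d) ≤ δ₁ * (l2 w * l2 d) :=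
    HasRIP.dotProduct_sub_le hRIP₁ hT hwT hdT
  have hnormal : (A *ᵥ w) ⬝ᵥ (A *ᵥ d) = (A *ᵥ w) ⬝ᵥ -e := by
    have : (A *ᵥ w) ⬝ᵥ (A *ᵥ xb - y) = 0 := mulVec_dotProduct_eq_zero_of_normal_eq hwS hxbls
    rw [show A *ᵥ xb - y = -(A *ᵥ d + e) by rw [hy, mulVec_sub]; abel, dotProduct_neg,
      dotProduct_add, neg_eq_zero] at this
    rw [dotProduct_neg]
    linarith
  have hnoise := HasRIP.mulVec_dotProduct_le hRIP₂ (hS ▸ spars_le_card hwS) (-e)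
  rw [l2_neg] at hnoise
  have hbound : l2 w ^ 2 ≤ l2 w * (δ₁ * l2 d + Real.sqrt (1 + δ₂) * l2 e) := by
    rw [← restr_dotProduct]
    linarith
  have hR : 0 ≤ δ₁ * l2 d + Real.sqrt (1 + δ₂) * l2 e :=
    add_nonneg (HasRIP.mul_l2_nonneg hRIP₁ ((spars_le_card hdT).trans hT))
      (mul_nonneg (Real.sqrt_nonneg _) (l2_nonneg e))
  nlinarith [l2_nonneg w]

theorem stmt2 {M N : ℕ} (A : Matrix (Fin M) (Fin N) ℝ)
    (x : Fin N → ℝ) (e : Fin M → ℝ) (y : Fin M → ℝ)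
    (hy : y = A.mulVec x + e)
    (s₁ s₂ : ℕ) (hx : spars x ≤ s₁)
    (S : Finset (Fin N)) (hS : S.card = s₂)
    (xb : Fin N → ℝ)
    -- x̄ is supported on S and x̄_S = A_S† y, characterized by the normal equations
    (hxbsupp : ∀ i ∉ S, xb i = 0)
    (hxbls : ∀ i ∈ S, ∑ j, A j i * (A.mulVec xb j - y j) = 0)
    (δ₁ δ₂ : ℝ) (hδ₁ : δ₁ < 1)
    (hRIP₁ : ∀ v : Fin N → ℝ, spars v ≤ s₁ + s₂ →
      (1 - δ₁) * (l2 v) ^ 2 ≤ (l2 (A.mulVec v)) ^ 2 ∧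
      (l2 (A.mulVec v)) ^ 2 ≤ (1 + δ₁) * (l2 v) ^ 2)
    (hRIP₂ : ∀ v : Fin N → ℝ, spars v ≤ s₂ →
      (1 - δ₂) * (l2 v) ^ 2 ≤ (l2 (A.mulVec v)) ^ 2 ∧
      (l2 (A.mulVec v)) ^ 2 ≤ (1 + δ₂) * (l2 v) ^ 2) :
    l2 (restr S (x - xb)) ≤ δ₁ * l2 (x - xb) + Real.sqrt (1 + δ₂) * l2 e :=
  stmt2_general A x e y hy s₁ s₂ hx S hS xb hxbsupp hxbls δ₁ δ₂ hRIP₁ hRIP₂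
end

section
/- Let x, z ∈ ℝ^N with ‖x‖₀ = s₁, ‖z‖₀ = s₂, s₂ ≥ s₁. Let S₂ = supp(z) and let S∇ ⊆ S₂ be the indices of the s₂ - s₁ smallest-magnitude entries of z. Then ‖x_{S∇}‖₂ ≤ √2 ‖(x - z)_{S₂}‖₂ ≤ √2 ‖x - z‖₂. -/
open Finset

/-!
Let `T` be the set of indices in `S₂` where `x` vanishes. Since `x` has at most `s₁` nonzero
entries, `|T| ≥ s₂ - s₁ = |S∇|`, so the part of `S∇` outside `T` can be matched with an equally
large part `T'` of `T \ S∇`. On `S∇ \ T` we use `x² ≤ 2(x - z)² + 2z²`; the entries of `z` there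
are no larger than those on `T' ⊆ S₂ \ S∇`, where `z² = (x - z)²` because `x` vanishes. Hence
`‖x_{S∇}‖² ≤ 2 ‖(x - z)_{(S∇ \ T) ∪ T'}‖² ≤ 2 ‖(x - z)_{S₂}‖²`.
-/

theorem Finset.sum_le_sum_of_card_eq_of_forall_le {ι M : Type*} [AddCommMonoid M]
    [LinearOrder M] [IsOrderedAddMonoid M] {s t : Finset ι} (hcard : #s = #t) {f g : ι → M}
    (hle : ∀ i ∈ s, ∀ j ∈ t, f i ≤ g j) :
    ∑ i ∈ s, f i ≤ ∑ j ∈ t, g j := by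
  rcases t.eq_empty_or_nonempty with rfl | ht
  · simp [card_eq_zero.mp hcard]
  calc ∑ i ∈ s, f i ≤ #s • t.inf' ht g :=
        sum_le_card_nsmul _ _ _ fun i hi => le_inf' ht g fun j hj => hle i hi j hj
    _ = #t • t.inf' ht g := by rw [hcard]
    _ ≤ ∑ j ∈ t, g j := card_nsmul_le_sum _ _ _ fun j hj => inf'_le g hj

theorem sum_sq_le_two_mul_sum_sq_sub {ι : Type*} [DecidableEq ι] {x z : ι → ℝ}
    {S A : Finset ι} (hAS : A ⊆ S) (hcard : #A ≤ #{i ∈ S | x i = 0})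
    (hsmall : ∀ i ∈ A, ∀ j ∈ S \ A, |z i| ≤ |z j|) :
    ∑ i ∈ A, x i ^ 2 ≤ 2 * ∑ i ∈ S, (x i - z i) ^ 2 := by
  set T := {i ∈ S | x i = 0}
  have hxT : ∀ i ∈ T, x i = 0 := fun i hi => (mem_filter.mp hi).2
  obtain ⟨T', hT', hT'card⟩ := exists_subset_card_eq (card_sdiff_le_card_sdiff_iff.mpr hcard)
  have hT'T : T' ⊆ T := hT'.trans sdiff_subset
  have hdisj : Disjoint (A \ T) T' :=
    disjoint_left.mpr fun i hi hiT' => (mem_sdiff.mp (hT' hiT')).2 (mem_sdiff.mp hi).1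
  have hunion : (A \ T) ∪ T' ⊆ S :=
    union_subset (sdiff_subset.trans hAS) (hT'T.trans (filter_subset _ S))
  have hzsum : ∑ i ∈ A \ T, z i ^ 2 ≤ ∑ j ∈ T', (x j - z j) ^ 2 := by
    refine sum_le_sum_of_card_eq_of_forall_le hT'card.symm fun i hi j hj => ?_
    obtain ⟨hjT, hjA⟩ := mem_sdiff.mp (hT' hj)
    rw [hxT j hjT, zero_sub, neg_sq, ← sq_abs, ← sq_abs (z j)]
    exact pow_le_pow_left₀ (abs_nonneg _)
      (hsmall i (mem_sdiff.mp hi).1 j (mem_sdiff.mpr ⟨filter_subset _ S hjT, hjA⟩)) 2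
  calc ∑ i ∈ A, x i ^ 2 = ∑ i ∈ A \ T, x i ^ 2 := by
        refine (sum_subset sdiff_subset fun i hiA hi => ?_).symm
        rw [hxT i (by simpa [hiA] using hi), sq, zero_mul]
    _ ≤ ∑ i ∈ A \ T, 2 * ((x i - z i) ^ 2 + z i ^ 2) :=
        sum_le_sum fun i _ => by simpa using add_sq_le (a := x i - z i) (b := z i)
    _ ≤ 2 * ∑ i ∈ (A \ T) ∪ T', (x i - z i) ^ 2 := by
        rw [← mul_sum, sum_union hdisj, sum_add_distrib]
        gcongr
    _ ≤ 2 * ∑ i ∈ S, (x i - z i) ^ 2 := by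
        gcongr

theorem spars_eq_card_filter {n : ℕ} (v : Fin n → ℝ) : spars v = #{i | v i ≠ 0} := by
  rw [spars, ← Set.ncard_coe_finset, coe_filter_univ]

theorem l2_restr {n : ℕ} (S : Finset (Fin n)) (v : Fin n → ℝ) :
    l2 (restr S v) = Real.sqrt (∑ i ∈ S, v i ^ 2) := by
  simp only [l2, restr, ite_pow, zero_pow two_ne_zero, sum_ite_mem, univ_inter]

theorem l2_restr_le {n : ℕ} (S : Finset (Fin n)) (v : Fin n → ℝ) :
    l2 (restr S v) ≤ l2 v := by
  rw [l2_restr, l2]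
  exact Real.sqrt_le_sqrt (sum_le_sum_of_subset_of_nonneg (subset_univ S) fun i _ _ => sq_nonneg _)

theorem stmt7_general {N : ℕ} (x z : Fin N → ℝ) (s₁ s₂ : ℕ)
    (hx : spars x = s₁) (hz : spars z = s₂)
    (S₂ : Finset (Fin N)) (hS₂ : ∀ i, i ∈ S₂ ↔ z i ≠ 0)
    (Snab : Finset (Fin N)) (hsub : Snab ⊆ S₂) (hcard : Snab.card = s₂ - s₁)
    (hsmall : ∀ i ∈ Snab, ∀ j ∈ S₂ \ Snab, |z i| ≤ |z j|) :
    l2 (restr Snab x) ≤ Real.sqrt 2 * l2 (restr S₂ (x - z)) ∧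
      Real.sqrt 2 * l2 (restr S₂ (x - z)) ≤ Real.sqrt 2 * l2 (x - z) := by
  refine ⟨?_, mul_le_mul_of_nonneg_left (l2_restr_le S₂ _) (Real.sqrt_nonneg 2)⟩
  have hS₂card : #S₂ = s₂ := by
    rw [← hz, spars_eq_card_filter]
    congr 1
    ext i
    simp [hS₂ i]
  have hsupp : #{i ∈ S₂ | x i ≠ 0} ≤ s₁ :=
    hx ▸ spars_eq_card_filter x ▸ card_le_card (filter_subset_filter _ (subset_univ S₂))
  have hzeros : #Snab ≤ #{i ∈ S₂ | x i = 0} := by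
    have := card_filter_add_card_filter_not (s := S₂) (fun i => x i = 0)
    simp only [ne_eq] at hsupp
    omega
  rw [l2_restr, l2_restr, ← Real.sqrt_mul zero_le_two]
  exact Real.sqrt_le_sqrt (by simpa using sum_sq_le_two_mul_sum_sq_sub hsub hzeros hsmall)

/-- ‖x_{S∇}‖₂ ≤ √2‖(x-z)_{S₂}‖₂ ≤ √2‖x-z‖₂. -/
theorem stmt7 {N : ℕ} (x z : Fin N → ℝ) (s₁ s₂ : ℕ)
    (hx : spars x = s₁) (hz : spars z = s₂) (hs : s₁ ≤ s₂)
    (S₂ : Finset (Fin N)) (hS₂ : ∀ i, i ∈ S₂ ↔ z i ≠ 0)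
    (Snab : Finset (Fin N)) (hsub : Snab ⊆ S₂) (hcard : Snab.card = s₂ - s₁)
    (hsmall : ∀ i ∈ Snab, ∀ j ∈ S₂ \ Snab, |z i| ≤ |z j|) :
    l2 (restr Snab x) ≤ Real.sqrt 2 * l2 (restr S₂ (x - z)) ∧
      Real.sqrt 2 * l2 (restr S₂ (x - z)) ≤ Real.sqrt 2 * l2 (x - z) :=
  stmt7_general x z s₁ s₂ hx hz S₂ hS₂ Snab hsub hcard hsmall
end

section
/- Let x, x̂ ∈ ℝ^N, T₀ a set of s indices, z = x̂ - x, λ ∈ (1/2, 1], and suppose λ‖x̂‖₁ + (1-λ)‖x̂ - w‖₂ ≤ λ‖x‖₁ + (1-λ)‖x - w‖₂ for some w ∈ ℝ^N. Then ‖z_{T₀^c}‖₁ ≤ (1/(2λ-1))‖z_{T₀}‖₁ + (2λ/(2λ-1))‖x_{T₀^c}‖₁. -/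
open Finset

/-!
The optimality of `xh` bounds the `l1` gain `lam * (‖xh‖₁ - ‖x‖₁)` by the `l2` loss
`(1 - lam) * (‖x - w‖₂ - ‖xh - w‖₂) ≤ (1 - lam) * ‖z‖₁`. Splitting both `l1` norms over `T₀` and
its complement, the gain is at least `lam * (‖z_{T₀ᶜ}‖₁ - ‖z_{T₀}‖₁ - 2‖x_{T₀ᶜ}‖₁)`; since
`2 lam - 1 > 0`, rearranging gives the cone constraint.
-/

section Norms

variable {n : ℕ}

lemma l1_restr (S : Finset (Fin n)) (v : Fin n → ℝ) : l1 (restr S v) = ∑ i ∈ S, |v i| := by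
  simp only [l1, restr, apply_ite abs, abs_zero, sum_ite_mem, univ_inter]

lemma l1_eq_l1_restr_add_l1_restr_compl (S : Finset (Fin n)) (v : Fin n → ℝ) :
    l1 v = l1 (restr S v) + l1 (restr Sᶜ v) := by
  rw [l1_restr, l1_restr, l1, sum_add_sum_compl]

lemma l2_eq_norm_toLp (v : Fin n → ℝ) : l2 v = ‖(WithLp.toLp 2 v : EuclideanSpace ℝ (Fin n))‖ := by
  simp [l2, EuclideanSpace.norm_eq]

lemma l2_le_l1 (v : Fin n → ℝ) : l2 v ≤ l1 v := by
  rw [l2, l1, Real.sqrt_le_left (sum_nonneg fun i _ => abs_nonneg _)]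
  simpa only [sq_abs] using sum_sq_le_sq_sum_of_nonneg (s := univ) fun i _ => abs_nonneg (v i)

lemma l2_sub_le_l2_sub_add_l1 (x y w : Fin n → ℝ) : l2 (x - w) ≤ l2 (y - w) + l1 (y - x) := by
  have h : l2 (x - w) ≤ l2 (y - w) + l2 (y - x) := by
    simp only [l2_eq_norm_toLp, WithLp.toLp_sub]
    linarith [norm_sub_le_norm_sub_add_norm_sub (WithLp.toLp 2 x : EuclideanSpace ℝ (Fin n))
      (WithLp.toLp 2 y) (WithLp.toLp 2 w), norm_sub_rev (WithLp.toLp 2 x : EuclideanSpace ℝ (Fin n))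
      (WithLp.toLp 2 y)]
  linarith [l2_le_l1 (y - x)]

-- Coordinatewise reverse triangle inequalities: on `S`, `|y i| - |x i| ≥ -|y i - x i|`;
-- off `S`, `|y i| - |x i| ≥ |y i - x i| - 2 |x i|`.
lemma l1_restr_compl_sub_sub_le_l1_sub (S : Finset (Fin n)) (x y : Fin n → ℝ) :
    l1 (restr Sᶜ (y - x)) - l1 (restr S (y - x)) - 2 * l1 (restr Sᶜ x) ≤ l1 y - l1 x := by
  have hS : ∀ i, -|y i - x i| ≤ |y i| - |x i| := fun i => by
    linarith [abs_sub_abs_le_abs_sub (x i) (y i), abs_sub_comm (x i) (y i)]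
  have hSc : ∀ i, |y i - x i| - 2 * |x i| ≤ |y i| - |x i| := fun i => by
    linarith [abs_sub (y i) (x i)]
  have h := add_le_add (sum_le_sum fun i (_ : i ∈ S) => hS i)
    (sum_le_sum fun i (_ : i ∈ Sᶜ) => hSc i)
  simp only [sum_sub_distrib, sum_neg_distrib, ← mul_sum] at h
  rw [l1_eq_l1_restr_add_l1_restr_compl S y, l1_eq_l1_restr_add_l1_restr_compl S x]
  simp only [l1_restr, Pi.sub_apply]
  linarith

end Norms

theorem stmt11_general {N : ℕ} (x xh w : Fin N → ℝ)
    (T₀ : Finset (Fin N))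
    (z : Fin N → ℝ) (hz : z = xh - x)
    (lam : ℝ) (hlam₁ : 1 / 2 < lam) (hlam₂ : lam ≤ 1)
    (hopt : lam * l1 xh + (1 - lam) * l2 (xh - w) ≤ lam * l1 x + (1 - lam) * l2 (x - w)) :
    l1 (restr T₀ᶜ z) ≤ (1 / (2 * lam - 1)) * l1 (restr T₀ z)
      + (2 * lam / (2 * lam - 1)) * l1 (restr T₀ᶜ x) := by
  subst hz
  have hl1_gain : lam * (l1 (restr T₀ᶜ (xh - x)) - l1 (restr T₀ (xh - x)) - 2 * l1 (restr T₀ᶜ x))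
      ≤ lam * (l1 xh - l1 x) :=
    mul_le_mul_of_nonneg_left (l1_restr_compl_sub_sub_le_l1_sub T₀ x xh) (by linarith)
  have hl2_loss : (1 - lam) * l2 (x - w) ≤ (1 - lam) * (l2 (xh - w) + l1 (xh - x)) :=
    mul_le_mul_of_nonneg_left (l2_sub_le_l2_sub_add_l1 x xh w) (by linarith)
  rw [l1_eq_l1_restr_add_l1_restr_compl T₀ (xh - x)] at hl2_loss
  rw [div_mul_eq_mul_div, div_mul_eq_mul_div, ← add_div, le_div_iff₀ (by linarith)]
  linarith

/-- cone constraint for the ℓ2-penalty objective, λ > 1/2. -/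
theorem stmt11 {N : ℕ} (x xh w : Fin N → ℝ) (s : ℕ)
    (T₀ : Finset (Fin N)) (hT₀ : T₀.card = s)
    (z : Fin N → ℝ) (hz : z = xh - x)
    (lam : ℝ) (hlam₁ : 1 / 2 < lam) (hlam₂ : lam ≤ 1)
    (hopt : lam * l1 xh + (1 - lam) * l2 (xh - w) ≤ lam * l1 x + (1 - lam) * l2 (x - w)) :
    l1 (restr T₀ᶜ z) ≤ (1 / (2 * lam - 1)) * l1 (restr T₀ z)
      + (2 * lam / (2 * lam - 1)) * l1 (restr T₀ᶜ x) :=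
  stmt11_general x xh w T₀ z hz lam hlam₁ hlam₂ hopt
end
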